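/- Let S_n(t) satisfy S_0 = 1, S_1(t) = [1 - q(1+q)c(q,1)/t]/(1-q) and the recurrence S_n(t) = (1-q^{n+1}) S_{n+1}(q^2 t) + (1+q) c(q,n)(qt)^{-1} S_n(t) + q d(q,n) t^{-2} S_{n-1}(q^{-2} t), with |c(q,n)| \leq K, |d(q,n)| \leq K^2, K \geq 1. Let f^b be the solution with f^b(\infty)=1 of the a=-1 functional equation f(z) = f(zq^2) - (q/z^2) f(zq^{-2}) - ((1+q)/(qz)) f(z), whose expansion in 1/z has positive coefficients. Then for all |t| \geq 1 and n \geq 0, |S_n(t)| \leq f^b(|t|/K) / \prod_{k=1}^n (1-q^k). -/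

import Mathlib

/-- The functions `S_n` defined by `S_0 = 1`,
`S_1(t) = [1 - q(1+q)c(q,1)/t]/(1-q)` and the recurrence
`S_n(t) = (1-q^{n+1}) S_{n+1}(q²t) + (1+q)c(q,n)(qt)⁻¹ S_n(t) + q d(q,n) t⁻² S_{n-1}(q^{-2}t)`,
written in solved form
`S_{n+1}(u) = [(1 - (1+q)c(q,n) q/u) S_n(q^{-2}u) - q⁵ d(q,n) u⁻² S_{n-1}(q^{-4}u)]/(1-q^{n+1})`. -/
noncomputable def SFun (q : ℝ) (c d : ℕ → ℂ) : ℕ → ℂ → ℂ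
  | 0 => fun _ => 1
  | 1 => fun t => (1 - (q : ℂ) * (1 + (q : ℂ)) * c 1 / t) / (1 - (q : ℂ))
  | (n + 2) => fun u =>
      ((1 - (1 + (q : ℂ)) * c (n + 1) * (q : ℂ) / u)
          * SFun q c d (n + 1) (((q : ℂ) ^ 2)⁻¹ * u)
        - (q : ℂ) ^ 5 * d (n + 1) / u ^ 2 * SFun q c d n (((q : ℂ) ^ 4)⁻¹ * u))
        / (1 - (q : ℂ) ^ (n + 2))

/-! With `F x = f^b (x / K)`, rescaling the functional equation gives
`F x = (1 + (1+q) q K / x) F (x / q²) + q⁵ K² / x² F (x / q⁴)`, and `F ≥ 1` because the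
series of `f^b` has nonnegative coefficients and constant term `1`. The coefficients of the
solved recurrence for `S_{n+2}(t)` are bounded in modulus by exactly the coefficients of this
identity, so `F` is a majorant and the bound follows by two-step induction on `n`: the arguments
`t / q²`, `t / q⁴` stay in `|t| ≥ 1`, and the product `∏ (1 - q^k)` decreases in `n`, so the
induction hypotheses can share the denominator `∏_{k ≤ n+1} (1 - q^k)`. -/

open Finset

section Coefficients

variable {q : ℝ}

lemma norm_ofReal_pow_inv_mul (hq : 0 ≤ q) (k : ℕ) (t : ℂ) :
    ‖((q : ℂ) ^ k)⁻¹ * t‖ = (q ^ k)⁻¹ * ‖t‖ := by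
  rw [norm_mul, norm_inv, norm_pow, Complex.norm_of_nonneg hq]

lemma one_le_inv_pow_mul (hq0 : 0 < q) (hq1 : q ≤ 1) (k : ℕ) {x : ℝ} (hx : 1 ≤ x) :
    1 ≤ (q ^ k)⁻¹ * x :=
  one_le_mul_of_one_le_of_one_le ((one_le_inv₀ (by positivity)).2 (pow_le_one₀ hq0.le hq1)) hx

lemma one_le_norm_ofReal_pow_inv_mul (hq0 : 0 < q) (hq1 : q ≤ 1) (k : ℕ) {t : ℂ}
    (ht : 1 ≤ ‖t‖) : 1 ≤ ‖((q : ℂ) ^ k)⁻¹ * t‖ := by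
  rw [norm_ofReal_pow_inv_mul hq0.le]
  exact one_le_inv_pow_mul hq0 hq1 k ht

lemma norm_one_sub_ofReal_pow (hq0 : 0 ≤ q) (hq1 : q ≤ 1) (n : ℕ) :
    ‖1 - (q : ℂ) ^ n‖ = 1 - q ^ n := by
  rw [← Complex.ofReal_pow, ← Complex.ofReal_one, ← Complex.ofReal_sub,
    Complex.norm_of_nonneg (sub_nonneg.2 (pow_le_one₀ hq0 hq1))]

lemma norm_one_sub_div_le {w t : ℂ} {a : ℝ} (hw : ‖w‖ ≤ a) :
    ‖1 - w / t‖ ≤ 1 + a / ‖t‖ :=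
  calc ‖1 - w / t‖ ≤ ‖(1 : ℂ)‖ + ‖w / t‖ := norm_sub_le _ _
    _ ≤ 1 + a / ‖t‖ := by rw [norm_one, norm_div]; gcongr

lemma norm_one_add_ofReal_mul_mul_le (hq : 0 ≤ q) {K : ℝ} {c : ℂ} (hc : ‖c‖ ≤ K) :
    ‖(1 + (q : ℂ)) * c * q‖ ≤ (1 + q) * q * K := by
  rw [← Complex.ofReal_one, ← Complex.ofReal_add, norm_mul, norm_mul,
    Complex.norm_of_nonneg (by positivity), Complex.norm_of_nonneg hq]
  nlinarith [norm_nonneg c, mul_nonneg (by positivity : (0 : ℝ) ≤ 1 + q) hq]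

lemma norm_ofReal_pow_mul_div_sq_le (hq : 0 ≤ q) {K : ℝ} {d t : ℂ} (hd : ‖d‖ ≤ K ^ 2) :
    ‖(q : ℂ) ^ 5 * d / t ^ 2‖ ≤ q ^ 5 * K ^ 2 / ‖t‖ ^ 2 := by
  rw [norm_div, norm_mul, norm_pow, norm_pow, Complex.norm_of_nonneg hq]
  gcongr

lemma prod_one_sub_pow_pos (hq0 : 0 ≤ q) (hq1 : q < 1) (n : ℕ) :
    0 < ∏ k ∈ range n, (1 - q ^ (k + 1)) :=
  prod_pos fun k _ => sub_pos.2 (pow_lt_one₀ hq0 hq1 k.succ_ne_zero)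

lemma prod_one_sub_pow_succ_le (hq0 : 0 ≤ q) (hq1 : q < 1) (n : ℕ) :
    ∏ k ∈ range (n + 1), (1 - q ^ (k + 1)) ≤ ∏ k ∈ range n, (1 - q ^ (k + 1)) := by
  rw [prod_range_succ]
  exact mul_le_of_le_one_right (prod_one_sub_pow_pos hq0 hq1 n).le
    (sub_le_self _ (pow_nonneg hq0 _))

end Coefficients

lemma one_le_of_hasSum_div_pow {a : ℕ → ℝ} {x s : ℝ} (h : HasSum (fun n => a n / x ^ n) s)
    (ha0 : a 0 = 1) (ha : ∀ n, 0 ≤ a n) (hx : 0 < x) : 1 ≤ s := by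
  simpa [ha0] using le_hasSum h 0 fun n _ => div_nonneg (ha n) (pow_nonneg hx.le n)

lemma funEq_rescaled {q K : ℝ} (hq : 0 < q) (hK : 0 < K) {f : ℝ → ℝ}
    (hf : ∀ x : ℝ, 0 < x →
      f x = f (x * q ^ 2) - q / x ^ 2 * f (x / q ^ 2) - (1 + q) / (q * x) * f x)
    {x : ℝ} (hx : 0 < x) :
    f (x / K) = (1 + (1 + q) * q * K / x) * f ((q ^ 2)⁻¹ * x / K)
      + q ^ 5 * K ^ 2 / x ^ 2 * f ((q ^ 4)⁻¹ * x / K) := by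
  have h := hf ((q ^ 2)⁻¹ * x / K) (by positivity)
  rw [show (q ^ 2)⁻¹ * x / K * q ^ 2 = x / K by field_simp,
    show (q ^ 2)⁻¹ * x / K / q ^ 2 = (q ^ 4)⁻¹ * x / K by field_simp] at h
  rw [show (1 + q) / (q * ((q ^ 2)⁻¹ * x / K)) = (1 + q) * q * K / x by field_simp,
    show q / ((q ^ 2)⁻¹ * x / K) ^ 2 = q ^ 5 * K ^ 2 / x ^ 2 by field_simp] at h
  linear_combination -h

section Majorant

variable {q K : ℝ} {c d : ℕ → ℂ}

lemma norm_SFun_add_two_le (hq0 : 0 ≤ q) (hq1 : q ≤ 1) (n : ℕ) (t : ℂ) :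
    ‖SFun q c d (n + 2) t‖ ≤
      (‖1 - (1 + (q : ℂ)) * c (n + 1) * q / t‖
          * ‖SFun q c d (n + 1) (((q : ℂ) ^ 2)⁻¹ * t)‖
        + ‖(q : ℂ) ^ 5 * d (n + 1) / t ^ 2‖ * ‖SFun q c d n (((q : ℂ) ^ 4)⁻¹ * t)‖)
        / (1 - q ^ (n + 2)) := by
  rw [SFun, norm_div, norm_one_sub_ofReal_pow hq0 hq1, ← norm_mul, ← norm_mul]
  gcongr
  · exact sub_nonneg.2 (pow_le_one₀ hq0 hq1)
  · exact norm_sub_le _ _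

variable (hq0 : 0 < q) (hq1 : q < 1) (hc : ∀ n, ‖c n‖ ≤ K) (hd : ∀ n, ‖d n‖ ≤ K ^ 2)
  {F : ℝ → ℝ} (hF1 : ∀ x, 1 ≤ x → 1 ≤ F x)
  (hF : ∀ x, 1 ≤ x → F x = (1 + (1 + q) * q * K / x) * F ((q ^ 2)⁻¹ * x)
    + q ^ 5 * K ^ 2 / x ^ 2 * F ((q ^ 4)⁻¹ * x))
include hq0 hq1 hc hF1 hF

lemma one_add_div_le_majorant {x : ℝ} (hx : 1 ≤ x) : 1 + (1 + q) * q * K / x ≤ F x := by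
  have hK : 0 ≤ K := (norm_nonneg _).trans (hc 0)
  have hx0 : 0 < x := zero_lt_one.trans_le hx
  have h1 := hF1 _ (one_le_inv_pow_mul hq0 hq1.le 2 hx)
  have h2 := hF1 _ (one_le_inv_pow_mul hq0 hq1.le 4 hx)
  rw [hF x hx]
  nlinarith [le_mul_of_one_le_right (by positivity : 0 ≤ 1 + (1 + q) * q * K / x) h1,
    mul_nonneg (by positivity : 0 ≤ q ^ 5 * K ^ 2 / x ^ 2) (zero_le_one.trans h2)]

include hd in
theorem norm_SFun_le_majorant (n : ℕ) :
    ∀ t : ℂ, 1 ≤ ‖t‖ →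
      ‖SFun q c d n t‖ ≤ F ‖t‖ / ∏ k ∈ range n, (1 - q ^ (k + 1)) := by
  induction n using Nat.twoStepInduction with
  | zero =>
    intro t ht
    simpa [SFun] using hF1 _ ht
  | one =>
    intro t ht
    have hnum : ‖(q : ℂ) * (1 + q) * c 1‖ ≤ (1 + q) * q * K := by
      rw [show (q : ℂ) * (1 + q) * c 1 = (1 + q) * c 1 * q by ring]
      exact norm_one_add_ofReal_mul_mul_le hq0.le (hc 1)
    have hden : ‖1 - (q : ℂ)‖ = 1 - q := by
      simpa using norm_one_sub_ofReal_pow hq0.le hq1.le 1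
    rw [SFun, norm_div, hden, prod_range_one, zero_add, pow_one]
    exact div_le_div_of_nonneg_right ((norm_one_sub_div_le hnum).trans
      (one_add_div_le_majorant hq0 hq1 hc hF1 hF ht)) (sub_pos.2 hq1).le
  | more n ih₀ ih₁ =>
    intro t ht
    set x := ‖t‖
    set P := ∏ k ∈ range (n + 1), (1 - q ^ (k + 1))
    have hP : 0 < P := prod_one_sub_pow_pos hq0.le hq1 _
    have h₁ := ih₁ _ (one_le_norm_ofReal_pow_inv_mul hq0 hq1.le 2 ht)
    have h₀ := ih₀ _ (one_le_norm_ofReal_pow_inv_mul hq0 hq1.le 4 ht)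
    rw [norm_ofReal_pow_inv_mul hq0.le] at h₀ h₁
    have h₀' : ‖SFun q c d n (((q : ℂ) ^ 4)⁻¹ * t)‖ ≤ F ((q ^ 4)⁻¹ * x) / P :=
      h₀.trans (div_le_div_of_nonneg_left
        (zero_le_one.trans (hF1 _ (one_le_inv_pow_mul hq0 hq1.le 4 ht))) hP
        (prod_one_sub_pow_succ_le hq0.le hq1 n))
    have hK : 0 ≤ K := (norm_nonneg _).trans (hc 0)
    calc ‖SFun q c d (n + 2) t‖
        ≤ ((1 + (1 + q) * q * K / x) * (F ((q ^ 2)⁻¹ * x) / P)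
          + q ^ 5 * K ^ 2 / x ^ 2 * (F ((q ^ 4)⁻¹ * x) / P)) / (1 - q ^ (n + 2)) := by
          refine (norm_SFun_add_two_le hq0.le hq1.le n t).trans ?_
          gcongr
          · exact sub_nonneg.2 (pow_le_one₀ hq0.le hq1.le)
          · exact norm_one_sub_div_le (norm_one_add_ofReal_mul_mul_le hq0.le (hc _))
          · exact norm_ofReal_pow_mul_div_sq_le hq0.le (hd _)
      _ = F x / (P * (1 - q ^ (n + 2))) := by rw [hF x ht, ← div_div]; ring
      _ = F x / ∏ k ∈ range (n + 2), (1 - q ^ (k + 1)) := by rw [prod_range_succ _ (n + 1)]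

end Majorant

/-- with `|c(q,n)| ≤ K`, `|d(q,n)| ≤ K²`, `K ≥ 1`, and `f^b` the
solution with `f^b(∞) = 1` of the `a = -1` functional equation
`f(z) = f(zq²) - (q/z²) f(zq^{-2}) - ((1+q)/(qz)) f(z)`, whose expansion in `1/z`
has positive coefficients, one has `|S_n(t)| ≤ f^b(|t|/K)/∏_{k=1}^n (1-q^k)` for all
`|t| ≥ 1` and `n ≥ 0`. -/
theorem SFun_bound (q : ℝ) (hq0 : 0 < q) (hq1 : q < 1) (K : ℝ) (hK : 1 ≤ K)
    (c d : ℕ → ℂ) (hc : ∀ n, ‖c n‖ ≤ K) (hd : ∀ n, ‖d n‖ ≤ K ^ 2)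
    (fb : ℝ → ℝ) (fcoef : ℕ → ℝ) (hf0 : fcoef 0 = 1) (hfpos : ∀ n, 0 < fcoef n)
    (hfsum : ∀ x : ℝ, x ≠ 0 → HasSum (fun n : ℕ => fcoef n / x ^ n) (fb x))
    (hfeq : ∀ x : ℝ, 0 < x →
      fb x = fb (x * q ^ 2) - q / x ^ 2 * fb (x / q ^ 2) - (1 + q) / (q * x) * fb x) :
    ∀ t : ℂ, 1 ≤ ‖t‖ → ∀ n : ℕ,
      ‖SFun q c d n t‖ ≤
        fb (‖t‖ / K) / ∏ k ∈ Finset.range n, (1 - q ^ (k + 1)) := by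
  have hK0 : 0 < K := zero_lt_one.trans_le hK
  have hfb1 (x : ℝ) (hx : 1 ≤ x) : 1 ≤ fb (x / K) :=
    one_le_of_hasSum_div_pow (hfsum _ (by positivity)) hf0 (fun n => (hfpos n).le)
      (by positivity)
  intro t ht n
  exact norm_SFun_le_majorant hq0 hq1 hc hd hfb1
    (fun x hx => funEq_rescaled hq0 hK0 hfeq (zero_lt_one.trans_le hx)) n t ht
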